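/- Let c ∈ (0,√2) and p ∈ (0,1). If p > p₀, then the function θ ↦ L(c,p,θ) is strictly decreasing on the interval (−∞, θ₁) and strictly decreasing on the interval (θ₁, θ₂). If p < p₀, then θ ↦ L(c,p,θ) is strictly decreasing on (−∞, θ₂). -/

import Mathlib

open Real Filter Set

/-- `ξ = p c⁴ / 4`. -/
noncomputable def xiPar (c p : ℝ) : ℝ := p * c ^ 4 / 4

/-- `κ₁ = √((c² − √(c⁴ − 4ξ))/2)`. -/
noncomputable def kappa1 (c p : ℝ) : ℝ :=
  Real.sqrt ((c ^ 2 - Real.sqrt (c ^ 4 - 4 * xiPar c p)) / 2)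

/-- `κ₂ = √((c² + √(c⁴ − 4ξ))/2)`. -/
noncomputable def kappa2 (c p : ℝ) : ℝ :=
  Real.sqrt ((c ^ 2 + Real.sqrt (c ^ 4 - 4 * xiPar c p)) / 2)

/-- The function `L(c,p,θ)` from the paper. -/
noncomputable def Lfun (c p θ : ℝ) : ℝ :=
  (1 / 2) * (1 + kappa2 c p / kappa1 c p)
  + (1 / Real.pi) * Real.arctan
      ((kappa2 c p * (-(kappa1 c p) ^ 2 + xiPar c p + xiPar c p * θ * Real.sqrt (2 - c ^ 2))) /
       (xiPar c p * (θ * (kappa1 c p) ^ 2 + Real.sqrt (2 - c ^ 2) + θ * (1 - c ^ 2))))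
  - (kappa2 c p / (kappa1 c p * Real.pi)) * Real.arctan
      ((kappa1 c p * (-(kappa2 c p) ^ 2 + xiPar c p + xiPar c p * θ * Real.sqrt (2 - c ^ 2))) /
       (xiPar c p * (θ * (kappa2 c p) ^ 2 + Real.sqrt (2 - c ^ 2) + θ * (1 - c ^ 2))))

/-- The discontinuity point `θ₁ = −2√(2−c²)/(2−c² − c²√(1−p))`. -/
noncomputable def theta1 (c p : ℝ) : ℝ :=
  -2 * Real.sqrt (2 - c ^ 2) / (2 - c ^ 2 - c ^ 2 * Real.sqrt (1 - p))

/-- The discontinuity point `θ₂ = −2√(2−c²)/(2−c² + c²√(1−p))`. -/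
noncomputable def theta2 (c p : ℝ) : ℝ :=
  -2 * Real.sqrt (2 - c ^ 2) / (2 - c ^ 2 + c ^ 2 * Real.sqrt (1 - p))

/-- The threshold `p₀ = 4(c²−1)/c⁴`. -/
noncomputable def p0 (c : ℝ) : ℝ := 4 * (c ^ 2 - 1) / c ^ 4

/-!
Each arctangent in `L` has the argument `(u + κ t) / (1 - u κ t)` with
`u = (κ² - 1) / (κ √(2 - c²))` (this uses only `ξ = κ₁²κ₂²` and `c² = κ₁² + κ₂²`), which by the
tangent addition formula is `tan (arctan u + arctan (κ t))`. Hence away from the poles `θ₁, θ₂`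
the function `L` has derivative `(κ₂/π) (1/(1 + κ₂²θ²) - 1/(1 + κ₁²θ²))`, negative for `θ ≠ 0`
because `κ₁ < κ₂`. The intervals of the statement avoid `0`, `θ₁` and `θ₂`: always `θ₂ < 0`,
and `θ₁ < θ₂` if `p > p₀`, `θ₁ > 0` if `p < p₀`.
-/

theorem hasDerivAt_arctan_add_div_one_sub_mul (u k θ : ℝ) (h : 1 - u * (k * θ) ≠ 0) :
    HasDerivAt (fun t => arctan ((u + k * t) / (1 - u * (k * t)))) (k / (1 + (k * θ) ^ 2)) θ := by
  have hN : HasDerivAt (fun t => u + k * t) k θ := by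
    simpa using ((hasDerivAt_id θ).const_mul k).const_add u
  have hD : HasDerivAt (fun t => 1 - u * (k * t)) (-(u * k)) θ := by
    simpa [mul_assoc] using (((hasDerivAt_id θ).const_mul k).const_mul u).const_sub 1
  have hQ : HasDerivAt (fun t => (u + k * t) / (1 - u * (k * t)))
      ((k * (1 - u * (k * θ)) - (u + k * θ) * -(u * k)) / (1 - u * (k * θ)) ^ 2) θ :=
    hN.div hD h
  convert hQ.arctan using 1
  have hsum : (1 - u * (k * θ)) ^ 2 + (u + k * θ) ^ 2 = (1 + u ^ 2) * (1 + (k * θ) ^ 2) := by ring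
  have h1u : 1 + u ^ 2 ≠ 0 := by positivity
  have hnum : k * (1 - u * (k * θ)) - (u + k * θ) * -(u * k) = k * (1 + u ^ 2) := by ring
  rw [div_pow, one_add_div (pow_ne_zero 2 h), hsum, hnum, one_div_div, div_mul_div_comm,
    mul_comm ((1 - u * (k * θ)) ^ 2), mul_div_mul_right _ _ (pow_ne_zero 2 h),
    mul_comm k (1 + u ^ 2), mul_div_mul_left _ _ h1u]

theorem Lfun_summand_arg_eq {a b s x c : ℝ} (ha : a ≠ 0) (hb : b ≠ 0) (hs : s ≠ 0)
    (hx : x = a ^ 2 * b ^ 2) (hc : c ^ 2 = a ^ 2 + b ^ 2) (t : ℝ) :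
    b * (-a ^ 2 + x + x * t * s) / (x * (t * a ^ 2 + s + t * (1 - c ^ 2))) =
      ((b ^ 2 - 1) / (b * s) + b * t) / (1 - (b ^ 2 - 1) / (b * s) * (b * t)) := by
  rw [hx, hc]
  field_simp
  ring

theorem hasDerivAt_arctan_Lfun_summand {a b s x c θ : ℝ} (ha : a ≠ 0) (hb : b ≠ 0) (hs : s ≠ 0)
    (hx : x = a ^ 2 * b ^ 2) (hc : c ^ 2 = a ^ 2 + b ^ 2)
    (hθ : θ * a ^ 2 + s + θ * (1 - c ^ 2) ≠ 0) :
    HasDerivAt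
      (fun t => arctan (b * (-a ^ 2 + x + x * t * s) / (x * (t * a ^ 2 + s + t * (1 - c ^ 2)))))
      (b / (1 + (b * θ) ^ 2)) θ := by
  simp_rw [Lfun_summand_arg_eq ha hb hs hx hc]
  apply hasDerivAt_arctan_add_div_one_sub_mul
  have hden : 1 - (b ^ 2 - 1) / (b * s) * (b * θ) = (θ * a ^ 2 + s + θ * (1 - c ^ 2)) / s := by
    rw [hc]
    field_simp
    ring
  rw [hden]
  exact div_ne_zero hθ hs

theorem add_mul_div_two_ne_zero {s e θ : ℝ} (hs : s ≠ 0) (hθ : θ ≠ -2 * s / e) :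
    s + θ * e / 2 ≠ 0 := by
  intro h
  rcases eq_or_ne e 0 with he | he
  · rw [he, mul_zero, zero_div, add_zero] at h
    exact hs h
  · exact hθ (by field_simp; linarith)

theorem one_div_one_add_sq_mul_lt {a b θ : ℝ} (ha : 0 < a) (hab : a < b) (hθ : θ ≠ 0) :
    1 / (1 + (b * θ) ^ 2) < 1 / (1 + (a * θ) ^ 2) := by
  apply one_div_lt_one_div_of_lt (by positivity)
  rw [mul_pow, mul_pow]
  have hθ2 : 0 < θ ^ 2 := by positivity
  gcongr

section Parameters

variable {c p : ℝ}

theorem sqrt_sq_sub_four_xiPar : √(c ^ 4 - 4 * xiPar c p) = c ^ 2 * √(1 - p) := by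
  rw [show c ^ 4 - 4 * xiPar c p = (c ^ 2) ^ 2 * (1 - p) by rw [xiPar]; ring,
    Real.sqrt_mul (sq_nonneg _), Real.sqrt_sq (sq_nonneg c)]

theorem kappa1_sq (hp : 0 ≤ p) : kappa1 c p ^ 2 = c ^ 2 * (1 - √(1 - p)) / 2 := by
  have hr : √(1 - p) ≤ 1 := Real.sqrt_le_one.mpr (by linarith)
  rw [kappa1, sqrt_sq_sub_four_xiPar, Real.sq_sqrt (by nlinarith [sq_nonneg c])]
  ring

theorem kappa2_sq : kappa2 c p ^ 2 = c ^ 2 * (1 + √(1 - p)) / 2 := by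
  rw [kappa2, sqrt_sq_sub_four_xiPar, Real.sq_sqrt (by positivity)]
  ring

theorem sq_eq_kappa1_sq_add_kappa2_sq (hp : 0 ≤ p) : c ^ 2 = kappa1 c p ^ 2 + kappa2 c p ^ 2 := by
  rw [kappa1_sq hp, kappa2_sq]
  ring

theorem xiPar_eq_kappa1_sq_mul_kappa2_sq (hp : p ∈ Icc 0 1) :
    xiPar c p = kappa1 c p ^ 2 * kappa2 c p ^ 2 := by
  have hr : √(1 - p) ^ 2 = 1 - p := Real.sq_sqrt (by linarith [hp.2])
  rw [kappa1_sq hp.1, kappa2_sq, xiPar]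
  linear_combination (c ^ 4 / 4) * hr

theorem kappa1_pos (hc : c ≠ 0) (hp : 0 < p) : 0 < kappa1 c p := by
  have hr : √(1 - p) < 1 := (Real.sqrt_lt' one_pos).mpr (by linarith)
  rw [kappa1, Real.sqrt_pos, sqrt_sq_sub_four_xiPar]
  have : 0 < c ^ 2 := by positivity
  nlinarith

theorem kappa1_lt_kappa2 (hc : c ≠ 0) (hp : p ∈ Ioo 0 1) : kappa1 c p < kappa2 c p := by
  have hr : 0 < √(1 - p) := Real.sqrt_pos.mpr (by linarith [hp.2])
  refine lt_of_pow_lt_pow_left₀ 2 (Real.sqrt_nonneg _ : 0 ≤ kappa2 c p) ?_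
  rw [kappa1_sq hp.1.le, kappa2_sq]
  have : 0 < c ^ 2 := by positivity
  nlinarith

theorem kappa1_pole_ne_zero {θ : ℝ} (hp : 0 ≤ p) (hs : √(2 - c ^ 2) ≠ 0) (hθ : θ ≠ theta1 c p) :
    θ * kappa1 c p ^ 2 + √(2 - c ^ 2) + θ * (1 - c ^ 2) ≠ 0 := by
  rw [show θ * kappa1 c p ^ 2 + √(2 - c ^ 2) + θ * (1 - c ^ 2)
      = √(2 - c ^ 2) + θ * (2 - c ^ 2 - c ^ 2 * √(1 - p)) / 2 by rw [kappa1_sq hp]; ring]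
  exact add_mul_div_two_ne_zero hs hθ

theorem kappa2_pole_ne_zero {θ : ℝ} (hs : √(2 - c ^ 2) ≠ 0) (hθ : θ ≠ theta2 c p) :
    θ * kappa2 c p ^ 2 + √(2 - c ^ 2) + θ * (1 - c ^ 2) ≠ 0 := by
  rw [show θ * kappa2 c p ^ 2 + √(2 - c ^ 2) + θ * (1 - c ^ 2)
      = √(2 - c ^ 2) + θ * (2 - c ^ 2 + c ^ 2 * √(1 - p)) / 2 by rw [kappa2_sq]; ring]
  exact add_mul_div_two_ne_zero hs hθ

theorem hasDerivAt_Lfun {θ : ℝ} (hc : c ≠ 0) (hc2 : c ^ 2 < 2) (hp : p ∈ Ioo 0 1)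
    (h1 : θ ≠ theta1 c p) (h2 : θ ≠ theta2 c p) :
    HasDerivAt (Lfun c p)
      (kappa2 c p / π * (1 / (1 + (kappa2 c p * θ) ^ 2) - 1 / (1 + (kappa1 c p * θ) ^ 2))) θ := by
  have hs : √(2 - c ^ 2) ≠ 0 := (Real.sqrt_pos.mpr (by linarith)).ne'
  have ha : kappa1 c p ≠ 0 := (kappa1_pos hc hp.1).ne'
  have hb : kappa2 c p ≠ 0 := ((kappa1_pos hc hp.1).trans (kappa1_lt_kappa2 hc hp)).ne'
  have hx := xiPar_eq_kappa1_sq_mul_kappa2_sq (c := c) (Ioo_subset_Icc_self hp)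
  have hsum := sq_eq_kappa1_sq_add_kappa2_sq (c := c) hp.1.le
  have hL1 := hasDerivAt_arctan_Lfun_summand ha hb hs hx hsum (kappa1_pole_ne_zero hp.1.le hs h1)
  have hL2 := hasDerivAt_arctan_Lfun_summand hb ha hs (hx.trans (mul_comm _ _))
    (hsum.trans (add_comm _ _)) (kappa2_pole_ne_zero hs h2)
  refine (((hL1.const_mul (1 / π)).const_add ((1 / 2) * (1 + kappa2 c p / kappa1 c p))).sub
    (hL2.const_mul (kappa2 c p / (kappa1 c p * π)))).congr_deriv ?_
  field_simp

theorem Lfun_strictAntiOn {S : Set ℝ} (hc : c ≠ 0) (hc2 : c ^ 2 < 2) (hp : p ∈ Ioo 0 1)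
    (hS : Convex ℝ S) (h0 : 0 ∉ S) (h1 : theta1 c p ∉ S) (h2 : theta2 c p ∉ S) :
    StrictAntiOn (Lfun c p) S := by
  have hderiv : ∀ θ ∈ S, HasDerivAt (Lfun c p)
      (kappa2 c p / π * (1 / (1 + (kappa2 c p * θ) ^ 2) - 1 / (1 + (kappa1 c p * θ) ^ 2))) θ :=
    fun θ hθ =>
      hasDerivAt_Lfun hc hc2 hp (ne_of_mem_of_not_mem hθ h1) (ne_of_mem_of_not_mem hθ h2)
  refine strictAntiOn_of_hasDerivWithinAt_neg hS
    (fun θ hθ => (hderiv θ hθ).continuousAt.continuousWithinAt)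
    (fun θ hθ => (hderiv θ (interior_subset hθ)).hasDerivWithinAt) fun θ hθ => ?_
  have hb : 0 < kappa2 c p := (kappa1_pos hc hp.1).trans (kappa1_lt_kappa2 hc hp)
  exact mul_neg_of_pos_of_neg (by positivity) (sub_neg.mpr (one_div_one_add_sq_mul_lt
    (kappa1_pos hc hp.1) (kappa1_lt_kappa2 hc hp) (ne_of_mem_of_not_mem (interior_subset hθ) h0)))

theorem two_sub_sq_sub_sq_mul_sqrt_pos (hc : c ≠ 0) (hc2 : c ^ 2 < 2) (hp1 : p ≤ 1)
    (hp : p0 c < p) : 0 < 2 - c ^ 2 - c ^ 2 * √(1 - p) := by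
  have hr : √(1 - p) ^ 2 = 1 - p := Real.sq_sqrt (by linarith)
  rw [p0, div_lt_iff₀ (by positivity)] at hp
  have : (c ^ 2 * √(1 - p)) ^ 2 < (2 - c ^ 2) ^ 2 := by rw [mul_pow, hr]; nlinarith
  linarith [lt_of_pow_lt_pow_left₀ 2 (by linarith) this]

theorem two_sub_sq_sub_sq_mul_sqrt_neg (hc : c ≠ 0) (hp1 : p ≤ 1) (hp : p < p0 c) :
    2 - c ^ 2 - c ^ 2 * √(1 - p) < 0 := by
  have hr : √(1 - p) ^ 2 = 1 - p := Real.sq_sqrt (by linarith)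
  rw [p0, lt_div_iff₀ (by positivity)] at hp
  have : (2 - c ^ 2) ^ 2 < (c ^ 2 * √(1 - p)) ^ 2 := by rw [mul_pow, hr]; nlinarith
  linarith [lt_of_pow_lt_pow_left₀ 2 (by positivity) this]

theorem theta2_neg (hc2 : c ^ 2 < 2) : theta2 c p < 0 :=
  div_neg_of_neg_of_pos (by nlinarith [Real.sqrt_pos.mpr (by linarith : 0 < 2 - c ^ 2)])
    (by nlinarith [mul_nonneg (sq_nonneg c) (Real.sqrt_nonneg (1 - p))])

theorem theta1_lt_theta2 (hc : c ≠ 0) (hc2 : c ^ 2 < 2) (hp : p ∈ Ioo 0 1) (hp0 : p0 c < p) :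
    theta1 c p < theta2 c p := by
  have he1 := two_sub_sq_sub_sq_mul_sqrt_pos hc hc2 hp.2.le hp0
  have hr : 0 < √(1 - p) := Real.sqrt_pos.mpr (by linarith [hp.2])
  have hs : 0 < √(2 - c ^ 2) := Real.sqrt_pos.mpr (by linarith)
  have : 0 < c ^ 2 * √(1 - p) := by positivity
  rw [theta1, theta2, div_lt_div_iff₀ he1 (by linarith)]
  nlinarith

theorem theta1_pos (hc : c ≠ 0) (hc2 : c ^ 2 < 2) (hp1 : p ≤ 1) (hp0 : p < p0 c) :
    0 < theta1 c p :=
  div_pos_of_neg_of_neg (by nlinarith [Real.sqrt_pos.mpr (by linarith : 0 < 2 - c ^ 2)])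
    (two_sub_sq_sub_sq_mul_sqrt_neg hc hp1 hp0)

end Parameters

theorem stmt9 (c p : ℝ) (hc : c ∈ Set.Ioo 0 (Real.sqrt 2)) (hp : p ∈ Set.Ioo 0 1) :
    (p > p0 c →
      StrictAntiOn (fun θ => Lfun c p θ) (Set.Iio (theta1 c p)) ∧
      StrictAntiOn (fun θ => Lfun c p θ) (Set.Ioo (theta1 c p) (theta2 c p))) ∧
    (p < p0 c →
      StrictAntiOn (fun θ => Lfun c p θ) (Set.Iio (theta2 c p))) := by
  have hc0 : c ≠ 0 := hc.1.ne'
  have hc2 : c ^ 2 < 2 := (Real.lt_sqrt hc.1.le).mp hc.2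
  have h2 : theta2 c p < 0 := theta2_neg hc2
  refine ⟨fun hp0 => ?_, fun hp0 => ?_⟩
  · have h12 := theta1_lt_theta2 hc0 hc2 hp hp0
    exact ⟨Lfun_strictAntiOn hc0 hc2 hp (convex_Iio _) (lt_asymm (h12.trans h2)) self_notMem_Iio
        (lt_asymm h12),
      Lfun_strictAntiOn hc0 hc2 hp (convex_Ioo _ _) (notMem_Ioo_of_ge h2.le)
        (notMem_Ioo_of_le le_rfl) (notMem_Ioo_of_ge le_rfl)⟩
  · have h1 := theta1_pos hc0 hc2 hp.2.le hp0
    exact Lfun_strictAntiOn hc0 hc2 hp (convex_Iio _) (lt_asymm h2) (lt_asymm (h2.trans h1))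
      self_notMem_Iio
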